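/- arXiv:2011.14865 — 5 statements merged into one kernel-verified Lean document; each statement's English description precedes it below -/
import Mathlib

section
/- Let p ≥ 1, let β̃ ∈ ℝ^p, and let I be a symmetric positive definite p×p real matrix. For λ ≥ 0 define b̂(λ) = −λ (I + λ·Id)⁻¹ β̃, v̂(λ) = (I + λ·Id)⁻¹ I (I + λ·Id)⁻¹ and m̂(λ) = v̂(λ) + b̂(λ) b̂(λ)ᵀ. Then for every λ > 0 with λ · (β̃ᵀβ̃) < 2 the matrix m̂(0) − m̂(λ) is symmetric positive definite; in particular there exists λ > 0 such that m̂(0) − m̂(λ) is positive definite. -/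
open Matrix

/-- Asymptotic bias of the ridge estimator at penalty `l`, with plug-in `β`. -/
noncomputable def ridgeBias {p : ℕ} (I : Matrix (Fin p) (Fin p) ℝ) (β : Fin p → ℝ)
    (l : ℝ) : Fin p → ℝ :=
  (-l) • ((I + l • (1 : Matrix (Fin p) (Fin p) ℝ))⁻¹ *ᵥ β)

/-- Asymptotic variance of the ridge estimator at penalty `l`. -/
noncomputable def ridgeVar {p : ℕ} (I : Matrix (Fin p) (Fin p) ℝ) (l : ℝ) :
    Matrix (Fin p) (Fin p) ℝ :=
  (I + l • (1 : Matrix (Fin p) (Fin p) ℝ))⁻¹ * I *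
    (I + l • (1 : Matrix (Fin p) (Fin p) ℝ))⁻¹

/-- Estimated second-order moment matrix `m̂(λ) = v̂(λ) + b̂(λ) b̂(λ)ᵀ`. -/
noncomputable def ridgeMoment {p : ℕ} (I : Matrix (Fin p) (Fin p) ℝ) (β : Fin p → ℝ)
    (l : ℝ) : Matrix (Fin p) (Fin p) ℝ :=
  ridgeVar I l + vecMulVec (ridgeBias I β l) (ridgeBias I β l)

/-! With `A = I + λ·Id` one has `A I⁻¹ A = I + 2λ·Id + λ² I⁻¹` and `b̂(λ) = −λ A⁻¹ β̃`, hence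
`m̂(0) − m̂(λ) = A⁻¹ (2λ·Id − λ² β̃β̃ᵀ + λ² I⁻¹) A⁻¹`. By Cauchy–Schwarz, `2λ·Id − λ² β̃β̃ᵀ` is
positive semidefinite as soon as `λ β̃ᵀβ̃ ≤ 2`, while `λ² I⁻¹` is positive definite, and congruence
by the invertible symmetric matrix `A⁻¹` preserves positive definiteness. -/

theorem Matrix.posSemidef_smul_one_sub_vecMulVec_self {n : Type*} [Fintype n] [DecidableEq n]
    {c : ℝ} {v : n → ℝ} (hv : v ⬝ᵥ v ≤ c) :
    (c • (1 : Matrix n n ℝ) - vecMulVec v v).PosSemidef := by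
  have hvv : (vecMulVec v v).IsHermitian := by
    simpa using (posSemidef_vecMulVec_self_star v).isHermitian
  refine posSemidef_iff_dotProduct_mulVec.mpr
    ⟨(isHermitian_one.smul (.all c)).sub hvv, fun x => ?_⟩
  have cauchySchwarz : (v ⬝ᵥ x) ^ 2 ≤ (v ⬝ᵥ v) * (x ⬝ᵥ x) := by
    simpa [dotProduct, sq] using Finset.sum_mul_sq_le_sq_mul_sq Finset.univ v x
  have hxx : 0 ≤ x ⬝ᵥ x := Finset.sum_nonneg fun i _ => mul_self_nonneg (x i)
  simp only [star_trivial, sub_mulVec, smul_mulVec, one_mulVec, vecMulVec_mulVec, dotProduct_sub,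
    dotProduct_smul, smul_eq_mul, MulOpposite.smul_eq_mul_unop, MulOpposite.unop_op]
  rw [dotProduct_comm x v]
  nlinarith [mul_le_mul_of_nonneg_right hv hxx]

theorem Matrix.mul_vecMulVec_mul_transpose {m n R : Type*} [Fintype n] [CommSemiring R]
    (S : Matrix m n R) (u v : n → R) :
    S * vecMulVec u v * Sᵀ = vecMulVec (S *ᵥ u) (S *ᵥ v) := by
  rw [mul_vecMulVec, vecMulVec_mul, vecMul_transpose]

variable {p : ℕ} {I : Matrix (Fin p) (Fin p) ℝ}

theorem ridgeMoment_zero (hI : IsUnit I.det) (β : Fin p → ℝ) : ridgeMoment I β 0 = I⁻¹ := by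
  simp [ridgeMoment, ridgeVar, ridgeBias, nonsing_inv_mul _ hI]

theorem inv_sub_ridgeVar (hI : IsUnit I.det) (l : ℝ) (hA : IsUnit (I + l • 1).det) :
    I⁻¹ - ridgeVar I l = (I + l • 1)⁻¹ * ((2 * l) • 1 + l ^ 2 • I⁻¹) * (I + l • 1)⁻¹ := by
  have hexpand : (I + l • 1) * I⁻¹ * (I + l • 1) = I + ((2 * l) • 1 + l ^ 2 • I⁻¹) := by
    rw [Matrix.add_mul, mul_nonsing_inv _ hI, Matrix.smul_mul, Matrix.one_mul, Matrix.add_mul,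
      Matrix.one_mul, Matrix.smul_mul, Matrix.mul_add, nonsing_inv_mul _ hI, Matrix.mul_smul,
      Matrix.mul_one, smul_add, smul_smul, ← sq, two_mul, add_smul]
    abel
  have hI_inv : I⁻¹ = (I + l • 1)⁻¹ * ((I + l • 1) * I⁻¹ * (I + l • 1)) * (I + l • 1)⁻¹ := by
    rw [← Matrix.mul_assoc, ← Matrix.mul_assoc, nonsing_inv_mul _ hA, Matrix.one_mul,
      Matrix.mul_assoc, mul_nonsing_inv _ hA, Matrix.mul_one]
  nth_rw 1 [hI_inv]
  rw [ridgeVar, hexpand, Matrix.mul_add, Matrix.add_mul, add_sub_cancel_left]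

theorem vecMulVec_ridgeBias (hI : I.IsSymm) (β : Fin p → ℝ) (l : ℝ) :
    vecMulVec (ridgeBias I β l) (ridgeBias I β l) =
      (I + l • 1)⁻¹ * vecMulVec (l • β) (l • β) * (I + l • 1)⁻¹ := by
  have hsymm : (I + l • 1)⁻¹ᵀ = (I + l • 1)⁻¹ := (hI.add (isSymm_one.smul l)).inv.eq
  conv_rhs => arg 2; rw [← hsymm]
  rw [mul_vecMulVec_mul_transpose]
  simp [ridgeBias, mulVec_smul]

theorem ridgeMoment_zero_sub_posDef (hI : I.PosDef) (β : Fin p → ℝ) {l : ℝ} (hl : 0 < l)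
    (hlβ : l * (β ⬝ᵥ β) ≤ 2) : (ridgeMoment I β 0 - ridgeMoment I β l).PosDef := by
  have hIdet : IsUnit I.det := (isUnit_iff_isUnit_det I).mp hI.isUnit
  have hA : (I + l • 1).PosDef := hI.add_posSemidef (PosSemidef.one.smul hl.le)
  have hAdet : IsUnit (I + l • 1).det := (isUnit_iff_isUnit_det _).mp hA.isUnit
  have hlβ' : (l • β) ⬝ᵥ (l • β) ≤ 2 * l := by
    simp only [smul_dotProduct, dotProduct_smul, smul_eq_mul]
    nlinarith
  have hmiddle : ((2 * l) • 1 - vecMulVec (l • β) (l • β) + l ^ 2 • I⁻¹).PosDef :=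
    PosDef.posSemidef_add (posSemidef_smul_one_sub_vecMulVec_self hlβ')
      (hI.inv.smul (by positivity))
  have hdiff : ridgeMoment I β 0 - ridgeMoment I β l = (I + l • 1)⁻¹ᴴ *
      ((2 * l) • 1 - vecMulVec (l • β) (l • β) + l ^ 2 • I⁻¹) * (I + l • 1)⁻¹ := by
    rw [hA.inv.isHermitian.eq, ridgeMoment_zero hIdet, ridgeMoment, sub_add_eq_sub_sub,
      inv_sub_ridgeVar hIdet l hAdet,
      vecMulVec_ridgeBias (isHermitian_iff_isSymm.mp hI.isHermitian) β l]
    simp only [Matrix.mul_add, Matrix.add_mul, Matrix.mul_sub, Matrix.sub_mul]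
    abel
  rw [hdiff]
  exact hmiddle.conjTranspose_mul_mul_same (mulVec_injective_iff_isUnit.mpr hA.inv.isUnit)

theorem stmt0_general (p : ℕ) (β : Fin p → ℝ) (I : Matrix (Fin p) (Fin p) ℝ)
    (hI : I.PosDef) :
    (∀ l : ℝ, 0 < l → l * (β ⬝ᵥ β) < 2 →
      (ridgeMoment I β 0 - ridgeMoment I β l).PosDef) ∧
    ∃ l : ℝ, 0 < l ∧ (ridgeMoment I β 0 - ridgeMoment I β l).PosDef := by
  have hββ : 0 ≤ β ⬝ᵥ β := Finset.sum_nonneg fun i _ => mul_self_nonneg (β i)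
  refine ⟨fun l hl hlβ => ridgeMoment_zero_sub_posDef hI β hl hlβ.le,
    1 / (β ⬝ᵥ β + 1), by positivity, ridgeMoment_zero_sub_posDef hI β (by positivity) ?_⟩
  rw [one_div_mul_eq_div, div_le_iff₀ (by positivity)]
  linarith

/-- For every `λ > 0` with `λ · β̃ᵀβ̃ < 2` the matrix `m̂(0) − m̂(λ)` is (symmetric)
positive definite; in particular such a `λ > 0` exists. -/
theorem stmt0 (p : ℕ) (hp : 1 ≤ p) (β : Fin p → ℝ) (I : Matrix (Fin p) (Fin p) ℝ)
    (hI : I.PosDef) :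
    (∀ l : ℝ, 0 < l → l * (β ⬝ᵥ β) < 2 →
      (ridgeMoment I β 0 - ridgeMoment I β l).PosDef) ∧
    ∃ l : ℝ, 0 < l ∧ (ridgeMoment I β 0 - ridgeMoment I β l).PosDef :=
  stmt0_general p β I hI
end

section
/- If a_{k0} > 1 and a_{k1} > 1 for all k = 1,…,K (no separation in the data), then there exists δ > 0 such that D(λ) < D(0) for all λ ∈ (0, δ); in particular the LOOCV deviance D is not minimized at λ = 0. -/
/-- Leave-one-out cross-validated deviance for a saturated model with `K` categories,
counts `a0 k` (nonevents) and `a1 k` (events), and ridge penalty parameter `l`.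
Summands whose count coefficient is zero vanish (in Lean, `0 * log _ = 0`). -/
noncomputable def loocvDev (K : ℕ) (a0 a1 : Fin K → ℕ) (l : ℝ) : ℝ :=
  -2 * ∑ k : Fin K,
    ((a0 k : ℝ) *
        Real.log (1 - ((a1 k : ℝ) + 2 * l) / ((a0 k : ℝ) + (a1 k : ℝ) - 1 + 4 * l)) +
     (a1 k : ℝ) *
        Real.log (((a1 k : ℝ) - 1 + 2 * l) / ((a0 k : ℝ) + (a1 k : ℝ) - 1 + 4 * l)))

/-!
Near `λ = 0` the `k`-th summand of `D(λ)/(-2)` equals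
`x log (x - 1 + 2λ) + y log (y - 1 + 2λ) - (x + y) log (x + y - 1 + 4λ)` with `x = a_{k0}`,
`y = a_{k1}`, whose derivative at `0` is `2/(x-1) + 2/(y-1) - 4/(x+y-1) > 0`.
Hence `D'(0) < 0`, so `D` strictly decreases just to the right of `0`.
-/

open Real Filter Topology Set

theorem HasDerivAt.eventually_nhdsGT_lt_of_neg {f : ℝ → ℝ} {f' a : ℝ}
    (hf : HasDerivAt f f' a) (hf' : f' < 0) : ∀ᶠ x in 𝓝[>] a, f x < f a := by
  have hslope : Tendsto (slope f a) (𝓝[>] a) (𝓝 f') :=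
    (hasDerivAt_iff_tendsto_slope.mp hf).mono_left (nhdsGT_le_nhdsNE a)
  filter_upwards [hslope.eventually_lt_const hf', self_mem_nhdsWithin] with x hx hax
  exact (slope_neg_iff_of_le (le_of_lt hax)).mp hx

noncomputable def loocvCellDev (x y l : ℝ) : ℝ :=
  x * log (1 - (y + 2 * l) / (x + y - 1 + 4 * l)) + y * log ((y - 1 + 2 * l) / (x + y - 1 + 4 * l))

theorem loocvDev_eq_sum (K : ℕ) (a0 a1 : Fin K → ℕ) (l : ℝ) :
    loocvDev K a0 a1 l = -2 * ∑ k, loocvCellDev (a0 k) (a1 k) l :=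
  rfl

theorem loocvCellDev_eq {x y l : ℝ} (hx : 0 < x - 1 + 2 * l) (hy : 0 < y - 1 + 2 * l) :
    loocvCellDev x y l =
      x * log (x - 1 + 2 * l) + y * log (y - 1 + 2 * l) - (x + y) * log (x + y - 1 + 4 * l) := by
  have hxy : 0 < x + y - 1 + 4 * l := by linarith
  have hcompl : 1 - (y + 2 * l) / (x + y - 1 + 4 * l) = (x - 1 + 2 * l) / (x + y - 1 + 4 * l) := by
    rw [eq_div_iff hxy.ne', sub_mul, div_mul_cancel₀ _ hxy.ne']
    ring
  rw [loocvCellDev, hcompl, log_div hx.ne' hxy.ne', log_div hy.ne' hxy.ne']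
  ring

theorem hasDerivAt_mul_log_affine (c b m : ℝ) (hb : b ≠ 0) :
    HasDerivAt (fun l : ℝ => c * log (b + m * l)) (c * (m / b)) 0 := by
  have haffine : HasDerivAt (fun l : ℝ => b + m * l) m 0 := by
    simpa using ((hasDerivAt_id (0 : ℝ)).const_mul m).const_add b
  simpa using (haffine.log (by simpa using hb)).const_mul c

theorem hasDerivAt_loocvCellDev {x y : ℝ} (hx : 1 < x) (hy : 1 < y) :
    HasDerivAt (loocvCellDev x y) (2 / (x - 1) + 2 / (y - 1) - 4 / (x + y - 1)) 0 := by
  have hx' : x - 1 ≠ 0 := by linarith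
  have hy' : y - 1 ≠ 0 := by linarith
  have hxy' : x + y - 1 ≠ 0 := by linarith
  have hlogForm := ((hasDerivAt_mul_log_affine x (x - 1) 2 hx').add
    (hasDerivAt_mul_log_affine y (y - 1) 2 hy')).sub
    (hasDerivAt_mul_log_affine (x + y) (x + y - 1) 4 hxy')
  have hderiv : x * (2 / (x - 1)) + y * (2 / (y - 1)) - (x + y) * (4 / (x + y - 1)) =
      2 / (x - 1) + 2 / (y - 1) - 4 / (x + y - 1) := by
    field_simp
    ring
  rw [hderiv] at hlogForm
  refine hlogForm.congr_of_eventuallyEq ?_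
  filter_upwards [eventually_gt_nhds (by linarith : (1 - x) / 2 < 0),
    eventually_gt_nhds (by linarith : (1 - y) / 2 < 0)] with l hlx hly
  exact loocvCellDev_eq (by linarith) (by linarith)

theorem loocvCellDev_deriv_pos {x y : ℝ} (hx : 1 < x) (hy : 1 < y) :
    0 < 2 / (x - 1) + 2 / (y - 1) - 4 / (x + y - 1) := by
  have hx' : 2 / (x + y - 1) < 2 / (x - 1) :=
    div_lt_div_of_pos_left two_pos (by linarith) (by linarith)
  have hy' : 2 / (x + y - 1) < 2 / (y - 1) :=
    div_lt_div_of_pos_left two_pos (by linarith) (by linarith)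
  have hsplit : 4 / (x + y - 1) = 2 / (x + y - 1) + 2 / (x + y - 1) := by ring
  linarith

theorem loocvDev_eventually_lt (K : ℕ) (hK : 1 ≤ K) (a0 a1 : Fin K → ℕ)
    (h : ∀ k, 1 < a0 k ∧ 1 < a1 k) :
    ∀ᶠ l in 𝓝[>] 0, loocvDev K a0 a1 l < loocvDev K a0 a1 0 := by
  have hx : ∀ k, (1 : ℝ) < a0 k := fun k => by exact_mod_cast (h k).1
  have hy : ∀ k, (1 : ℝ) < a1 k := fun k => by exact_mod_cast (h k).2
  have hD : HasDerivAt (loocvDev K a0 a1)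
      (-2 * ∑ k, (2 / (a0 k - 1 : ℝ) + 2 / (a1 k - 1 : ℝ) - 4 / (a0 k + a1 k - 1 : ℝ)))
      0 := by
    simp only [funext (loocvDev_eq_sum K a0 a1)]
    exact (HasDerivAt.fun_sum fun k _ =>
      hasDerivAt_loocvCellDev (hx k) (hy k)).const_mul (-2)
  have hne : Nonempty (Fin K) := Fin.pos_iff_nonempty.mp hK
  refine hD.eventually_nhdsGT_lt_of_neg ?_
  have hsum_pos :=
    Finset.sum_pos (fun k _ => loocvCellDev_deriv_pos (hx k) (hy k)) Finset.univ_nonempty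
  linarith

/-- No separation (`a_{k0}, a_{k1} > 1` for all `k`) implies the LOOCV deviance is
strictly smaller than `D(0)` on some right-neighborhood of `0`; in particular it is
not minimized at `λ = 0`. -/
theorem stmt2 (K : ℕ) (hK : 1 ≤ K) (a0 a1 : Fin K → ℕ)
    (h : ∀ k, 1 < a0 k ∧ 1 < a1 k) :
    (∃ δ : ℝ, 0 < δ ∧ ∀ l : ℝ, 0 < l → l < δ →
      loocvDev K a0 a1 l < loocvDev K a0 a1 0) ∧
    ¬ (∀ l : ℝ, 0 ≤ l → loocvDev K a0 a1 0 ≤ loocvDev K a0 a1 l) := by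
  obtain ⟨δ, hδ, hdecr⟩ :=
    (nhdsGT_basis (0 : ℝ)).eventually_iff.mp (loocvDev_eventually_lt K hK a0 a1 h)
  refine ⟨⟨δ, hδ, fun l hl hlδ => hdecr ⟨hl, hlδ⟩⟩, fun hmin => ?_⟩
  have hmid := hdecr (⟨half_pos hδ, half_lt_self hδ⟩ : δ / 2 ∈ Ioo 0 δ)
  exact (hmin (δ / 2) (half_pos hδ).le).not_gt hmid
end

section
/- If a_{k0} > 1, a_{k1} > 1 and (a_{k0} − a_{k1})² − a_{k•} > 0 for all k = 1,…,K, then the LOOCV deviance D attains its minimum over [0, ∞) at some λ* with 0 < λ* < ∞: there exists λ* > 0 such that D(λ*) ≤ D(λ) for all λ ≥ 0, D(λ*) < D(0), and D(λ*) < lim_{λ→∞} D(λ). -/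
open Real Filter Set Topology

theorem HasDerivWithinAt.exists_gt_lt_of_neg {f : ℝ → ℝ} {f' x : ℝ}
    (hf : HasDerivWithinAt f f' (Ici x) x) (hf' : f' < 0) : ∃ z, x < z ∧ f z < f x := by
  obtain ⟨z, hslope, hxz⟩ :=
    ((hf.liminf_right_slope_le hf').and_eventually self_mem_nhdsWithin).exists
  exact ⟨z, hxz, (slope_neg_iff_of_le hxz.le).mp hslope⟩

theorem StrictAntiOn.lt_of_tendsto_atTop {α β : Type*} [LinearOrder α] [NoMaxOrder α]
    [TopologicalSpace β] [Preorder β] [ClosedIicTopology β] {f : α → β} {a : α} {L : β}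
    (hf : StrictAntiOn f (Ici a)) (hL : Tendsto f atTop (𝓝 L)) : L < f a := by
  have : Nonempty α := ⟨a⟩
  obtain ⟨b, hab⟩ := exists_gt a
  calc L ≤ f b := le_of_tendsto hL <| (eventually_ge_atTop b).mono fun x hbx =>
          hf.antitoneOn (mem_Ici.mpr hab.le) (mem_Ici.mpr (hab.le.trans hbx)) hbx
    _ < f a := hf self_mem_Ici (mem_Ici.mpr hab.le) hab

theorem ContinuousOn.exists_isMinOn_Ici_of_tendsto_atTop {f : ℝ → ℝ} {a b L : ℝ}
    (hf : ContinuousOn f (Ici a)) (hL : Tendsto f atTop (𝓝 L)) (hab : a ≤ b) (hb : f b < L) :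
    ∃ x ∈ Ici a, IsMinOn f (Ici a) x := by
  refine hf.exists_isMinOn' isClosed_Ici (mem_Ici.mpr hab) ?_
  rw [cocompact_eq_atBot_atTop, inf_sup_right, eventually_sup]
  constructor
  · have hempty : atBot ⊓ 𝓟 (Ici a) = ⊥ := by
      rw [inf_principal_eq_bot]
      filter_upwards [eventually_lt_atBot a] with x hx using not_le.mpr hx
    simp [hempty]
  · exact ((hL.eventually (eventually_gt_nhds hb)).mono fun _ h => h.le).filter_mono inf_le_left

theorem tendsto_add_mul_div_add_mul_atTop (c d p : ℝ) {q : ℝ} (hq : 0 < q) :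
    Tendsto (fun l => (c + p * l) / (d + q * l)) atTop (𝓝 (p / q)) := by
  have hden : Tendsto (fun l => d + q * l) atTop atTop :=
    tendsto_atTop_add_const_left _ _ (tendsto_id.const_mul_atTop hq)
  have hlim := tendsto_const_nhds (x := p / q) |>.add <|
    (tendsto_const_nhds (x := c - p * d / q)).div_atTop hden
  rw [add_zero] at hlim
  refine hlim.congr' ?_
  filter_upwards [hden.eventually_gt_atTop 0] with l hl
  field_simp
  ring

/-- With `x = b0 - 1 + 2l` and `y = b1 - 1 + 2l` the leave-one-out estimates are
`1 - π̂₀ = x / (x + y + 1)` and `π̂₁ = y / (x + y + 1)`. -/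
noncomputable def looLogLik (b0 b1 l : ℝ) : ℝ :=
  b0 * log (b0 - 1 + 2 * l) + b1 * log (b1 - 1 + 2 * l) - (b0 + b1) * log (b0 + b1 - 1 + 4 * l)

section looLogLik

variable {b0 b1 : ℝ}

theorem hasDerivAt_looLogLik (hb0 : 1 < b0) (hb1 : 1 < b1) {l : ℝ} (hl : 0 ≤ l) :
    HasDerivAt (looLogLik b0 b1)
      (2 * (b0 * (b0 - 1) + b1 * (b1 - 1) - 2 * ((b0 - b1) ^ 2 - (b0 + b1)) * l) /
        ((b0 - 1 + 2 * l) * (b1 - 1 + 2 * l) * (b0 + b1 - 1 + 4 * l))) l := by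
  have hx : 0 < b0 - 1 + 2 * l := by linarith
  have hy : 0 < b1 - 1 + 2 * l := by linarith
  have hz : 0 < b0 + b1 - 1 + 4 * l := by linarith
  have hlin : ∀ c e : ℝ, HasDerivAt (fun t => c + e * t) e l := fun c e => by
    simpa using ((hasDerivAt_id l).const_mul e).const_add c
  have hsum : HasDerivAt (looLogLik b0 b1) _ l :=
    (((hlin _ 2).log hx.ne').const_mul b0).add (((hlin _ 2).log hy.ne').const_mul b1)
      |>.sub (((hlin _ 4).log hz.ne').const_mul (b0 + b1))
  refine hsum.congr_deriv ?_
  simp only [mul_div_assoc']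
  rw [div_add_div _ _ hx.ne' hy.ne', div_sub_div _ _ (by positivity) hz.ne',
    div_eq_div_iff (by positivity) (by positivity)]
  ring

theorem tendsto_looLogLik_atTop :
    Tendsto (looLogLik b0 b1) atTop (𝓝 (-((b0 + b1) * log 2))) := by
  have hratio : ∀ c, Tendsto (fun l => log ((c + 2 * l) / (b0 + b1 - 1 + 4 * l))) atTop
      (𝓝 (-log 2)) := fun c => by
    have := (tendsto_add_mul_div_add_mul_atTop c (b0 + b1 - 1) 2 four_pos).log (by norm_num)
    rwa [show (2 : ℝ) / 4 = 2⁻¹ by norm_num, log_inv] at this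
  have hlim := ((hratio (b0 - 1)).const_mul b0).add ((hratio (b1 - 1)).const_mul b1)
  rw [show b0 * -log 2 + b1 * -log 2 = -((b0 + b1) * log 2) by ring] at hlim
  refine hlim.congr' ?_
  filter_upwards [eventually_gt_atTop (|b0 - 1| + |b1 - 1|)] with l hl
  have := neg_abs_le (b0 - 1); have := neg_abs_le (b1 - 1)
  have := abs_nonneg (b0 - 1); have := abs_nonneg (b1 - 1)
  rw [log_div (by linarith) (by linarith), log_div (by linarith) (by linarith), looLogLik]
  ring

theorem deriv_looLogLik_zero_pos (hb0 : 1 < b0) (hb1 : 1 < b1) :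
    0 < deriv (looLogLik b0 b1) 0 := by
  rw [(hasDerivAt_looLogLik hb0 hb1 le_rfl).deriv]
  apply div_pos
  · nlinarith
  · simp only [mul_zero, add_zero]
    exact mul_pos (mul_pos (by linarith) (by linarith)) (by linarith)

theorem strictAntiOn_looLogLik (hb0 : 1 < b0) (hb1 : 1 < b1)
    (hc : 0 < (b0 - b1) ^ 2 - (b0 + b1)) :
    StrictAntiOn (looLogLik b0 b1)
      (Ici ((b0 * (b0 - 1) + b1 * (b1 - 1)) / (2 * ((b0 - b1) ^ 2 - (b0 + b1))))) := by
  have ht : 0 ≤ (b0 * (b0 - 1) + b1 * (b1 - 1)) / (2 * ((b0 - b1) ^ 2 - (b0 + b1))) :=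
    div_nonneg (by nlinarith) (by linarith)
  refine strictAntiOn_of_deriv_neg (convex_Ici _) (fun l hl =>
    (hasDerivAt_looLogLik hb0 hb1 (ht.trans hl)).continuousAt.continuousWithinAt) fun l hl => ?_
  rw [interior_Ici, mem_Ioi] at hl
  rw [(hasDerivAt_looLogLik hb0 hb1 (ht.trans hl.le)).deriv]
  have hnum := (div_lt_iff₀' (by linarith)).mp hl
  apply div_neg_of_neg_of_pos
  · linarith
  · have hl0 := ht.trans hl.le
    exact mul_pos (mul_pos (by linarith) (by linarith)) (by linarith)

end looLogLik

section loocvDev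

variable {K : ℕ} {a0 a1 : Fin K → ℕ}

theorem loocvDev_eq_sum_looLogLik (ha0 : ∀ k, 1 < a0 k) (ha1 : ∀ k, 1 < a1 k) {l : ℝ}
    (hl : 0 ≤ l) : loocvDev K a0 a1 l = -2 * ∑ k, looLogLik (a0 k) (a1 k) l := by
  unfold loocvDev
  congr 1
  refine Finset.sum_congr rfl fun k _ => ?_
  have hb0 : (1 : ℝ) < a0 k := by exact_mod_cast ha0 k
  have hb1 : (1 : ℝ) < a1 k := by exact_mod_cast ha1 k
  rw [one_sub_div (by linarith),
    show (a0 k + a1 k - 1 + 4 * l : ℝ) - (a1 k + 2 * l) = a0 k - 1 + 2 * l by ring,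
    log_div (by linarith) (by linarith), log_div (by linarith) (by linarith), looLogLik]
  ring

theorem continuousOn_loocvDev (ha0 : ∀ k, 1 < a0 k) (ha1 : ∀ k, 1 < a1 k) :
    ContinuousOn (loocvDev K a0 a1) (Ici 0) := by
  refine ContinuousOn.congr (f := fun l => -2 * ∑ k, looLogLik (a0 k) (a1 k) l) ?_
    fun l hl => loocvDev_eq_sum_looLogLik ha0 ha1 hl
  refine continuousOn_const.mul (continuousOn_finsetSum _ fun k _ l hl => ?_)
  exact (hasDerivAt_looLogLik (by exact_mod_cast ha0 k) (by exact_mod_cast ha1 k)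
    hl).continuousAt.continuousWithinAt

theorem tendsto_loocvDev_atTop (ha0 : ∀ k, 1 < a0 k) (ha1 : ∀ k, 1 < a1 k) :
    Tendsto (loocvDev K a0 a1) atTop (𝓝 (2 * log 2 * ∑ k, ((a0 k : ℝ) + a1 k))) := by
  have hlim := (tendsto_finsetSum Finset.univ fun k _ =>
    tendsto_looLogLik_atTop (b0 := a0 k) (b1 := a1 k)).const_mul (-2)
  rw [Finset.sum_neg_distrib, ← Finset.sum_mul] at hlim
  convert hlim.congr' ((eventually_ge_atTop 0).mono fun l hl =>
    (loocvDev_eq_sum_looLogLik ha0 ha1 hl).symm) using 2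
  ring

theorem exists_pos_loocvDev_lt_loocvDev_zero [NeZero K] (ha0 : ∀ k, 1 < a0 k)
    (ha1 : ∀ k, 1 < a1 k) : ∃ l, 0 < l ∧ loocvDev K a0 a1 l < loocvDev K a0 a1 0 := by
  have hderiv : HasDerivAt (fun l => -2 * ∑ k, looLogLik (a0 k) (a1 k) l)
      (-2 * ∑ k, deriv (looLogLik (a0 k) (a1 k)) 0) 0 :=
    (HasDerivAt.fun_sum fun k _ => (hasDerivAt_looLogLik (by exact_mod_cast ha0 k)
      (by exact_mod_cast ha1 k) le_rfl).differentiableAt.hasDerivAt).const_mul (-2)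
  have hneg : -2 * ∑ k, deriv (looLogLik (a0 k) (a1 k)) 0 < 0 := by
    have := Finset.sum_pos (fun k _ => deriv_looLogLik_zero_pos (b0 := a0 k) (b1 := a1 k)
      (by exact_mod_cast ha0 k) (by exact_mod_cast ha1 k)) Finset.univ_nonempty
    linarith
  exact (hderiv.hasDerivWithinAt.congr (fun l hl => loocvDev_eq_sum_looLogLik ha0 ha1 hl)
    (loocvDev_eq_sum_looLogLik ha0 ha1 le_rfl)).exists_gt_lt_of_neg hneg

theorem exists_nonneg_loocvDev_lt_limit [NeZero K] (ha0 : ∀ k, 1 < a0 k) (ha1 : ∀ k, 1 < a1 k)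
    (hc : ∀ k, 0 < ((a0 k : ℝ) - a1 k) ^ 2 - (a0 k + a1 k)) :
    ∃ l, 0 ≤ l ∧ loocvDev K a0 a1 l < 2 * log 2 * ∑ k, ((a0 k : ℝ) + a1 k) := by
  obtain ⟨M, hM⟩ := Finite.exists_le fun k : Fin K =>
    ((a0 k : ℝ) * (a0 k - 1) + a1 k * (a1 k - 1)) / (2 * ((a0 k - a1 k : ℝ) ^ 2 - (a0 k + a1 k)))
  have hlt : ∀ k, -(((a0 k : ℝ) + a1 k) * log 2) < looLogLik (a0 k) (a1 k) (max M 0) :=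
    fun k => (strictAntiOn_looLogLik (by exact_mod_cast ha0 k) (by exact_mod_cast ha1 k) (hc k)
      |>.mono (Ici_subset_Ici.mpr ((hM k).trans (le_max_left M 0)))).lt_of_tendsto_atTop
      tendsto_looLogLik_atTop
  refine ⟨max M 0, le_max_right M 0, ?_⟩
  have hsum := Finset.sum_lt_sum_of_nonempty Finset.univ_nonempty fun k _ => hlt k
  rw [Finset.sum_neg_distrib, ← Finset.sum_mul] at hsum
  rw [loocvDev_eq_sum_looLogLik ha0 ha1 (le_max_right M 0)]
  linarith

end loocvDev

/-- If `a_{k0}, a_{k1} > 1` and `(a_{k0} − a_{k1})² − a_{k•} > 0` for all `k`, the LOOCV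
deviance attains its minimum over `[0, ∞)` at some `0 < λ* < ∞`, with `D(λ*) < D(0)`
and `D(λ*)` strictly below the limit of `D` at infinity. -/
theorem stmt3 (K : ℕ) (hK : 1 ≤ K) (a0 a1 : Fin K → ℕ)
    (h : ∀ k, 1 < a0 k ∧ 1 < a1 k ∧
      0 < ((a0 k : ℝ) - (a1 k : ℝ)) ^ 2 - ((a0 k : ℝ) + (a1 k : ℝ))) :
    ∃ lstar : ℝ, 0 < lstar ∧
      (∀ l : ℝ, 0 ≤ l → loocvDev K a0 a1 lstar ≤ loocvDev K a0 a1 l) ∧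
      loocvDev K a0 a1 lstar < loocvDev K a0 a1 0 ∧
      ∃ L : ℝ, Filter.Tendsto (loocvDev K a0 a1) Filter.atTop (nhds L) ∧
        loocvDev K a0 a1 lstar < L := by
  have : NeZero K := ⟨by omega⟩
  have ha0 k := (h k).1
  have ha1 k := (h k).2.1
  have hlim := tendsto_loocvDev_atTop ha0 ha1
  obtain ⟨l₁, hl₁, hD₁⟩ := exists_pos_loocvDev_lt_loocvDev_zero ha0 ha1
  obtain ⟨l₂, hl₂, hD₂⟩ := exists_nonneg_loocvDev_lt_limit ha0 ha1 fun k => (h k).2.2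
  obtain ⟨lstar, hlstar, hmin⟩ :=
    (continuousOn_loocvDev ha0 ha1).exists_isMinOn_Ici_of_tendsto_atTop hlim hl₂ hD₂
  have hlt₀ : loocvDev K a0 a1 lstar < loocvDev K a0 a1 0 := (hmin hl₁.le).trans_lt hD₁
  refine ⟨lstar, hlstar.lt_of_ne ?_, fun l hl => hmin hl, hlt₀, _, hlim, (hmin hl₂).trans_lt hD₂⟩
  rintro rfl
  exact hlt₀.false
end

section
/- Let K = 1 and assume a_{10} > 1, a_{11} > 1 and (a_{10} − a_{11})² − a_{1•} > 0. Then the LOOCV deviance D is uniquely minimized over [0, ∞) at λ* = ( a_{10}(a_{10} − 1) + a_{11}(a_{11} − 1) ) / ( 2( (a_{10} − a_{11})² − a_{1•} ) ): one has D(λ*) < D(λ) for every λ ≥ 0 with λ ≠ λ*. -/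
/-!
With `a = a₁₀`, `b = a₁₁` and `λ ≥ 0`, the deviance is
`2 ((a + b) log (a + b - 1 + 4λ) - a log (a - 1 + 2λ) - b log (b - 1 + 2λ))`.
Its derivative is `4 (2 ((a - b)² - (a + b)) λ - (a (a - 1) + b (b - 1)))` divided by the
product of the three (positive) denominators, so it is negative before `λ*` and positive
after it: the deviance strictly decreases on `[0, λ*]` and strictly increases on `[λ*, ∞)`.
-/

open Set

noncomputable def loocvDevSingle (a b l : ℝ) : ℝ :=
  2 * ((a + b) * Real.log (a + b - 1 + 4 * l)
    - a * Real.log (a - 1 + 2 * l) - b * Real.log (b - 1 + 2 * l))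

noncomputable def loocvOptimum (a b : ℝ) : ℝ :=
  (a * (a - 1) + b * (b - 1)) / (2 * ((a - b) ^ 2 - (a + b)))

lemma loocvDev_one_eq_loocvDevSingle {a10 a11 : ℕ} (h0 : 1 < a10) (h1 : 1 < a11)
    {l : ℝ} (hl : 0 ≤ l) :
    loocvDev 1 (fun _ => a10) (fun _ => a11) l = loocvDevSingle a10 a11 l := by
  have ha : (1 : ℝ) < a10 := by exact_mod_cast h0
  have hb : (1 : ℝ) < a11 := by exact_mod_cast h1
  have hp : (0 : ℝ) < a10 - 1 + 2 * l := by linarith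
  have hq : (0 : ℝ) < a11 - 1 + 2 * l := by linarith
  have hs : (0 : ℝ) < a10 + a11 - 1 + 4 * l := by linarith
  have hcompl : 1 - ((a11 : ℝ) + 2 * l) / (a10 + a11 - 1 + 4 * l)
      = (a10 - 1 + 2 * l) / (a10 + a11 - 1 + 4 * l) := by
    rw [eq_div_iff hs.ne', sub_mul, div_mul_cancel₀ _ hs.ne']
    ring
  rw [loocvDev, loocvDevSingle, Fin.sum_univ_one, hcompl,
    Real.log_div hp.ne' hs.ne', Real.log_div hq.ne' hs.ne']
  ring

section Calculus

variable {a b : ℝ}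

lemma hasDerivAt_loocvDevSingle {l : ℝ} (hp : 0 < a - 1 + 2 * l) (hq : 0 < b - 1 + 2 * l) :
    HasDerivAt (loocvDevSingle a b)
      (4 * (2 * ((a - b) ^ 2 - (a + b)) * l - (a * (a - 1) + b * (b - 1)))
        / ((a - 1 + 2 * l) * (b - 1 + 2 * l) * (a + b - 1 + 4 * l))) l := by
  have hs : 0 < a + b - 1 + 4 * l := by linarith
  have hlog : ∀ {c k : ℝ}, 0 < c + k * l →
      HasDerivAt (fun x => Real.log (c + k * x)) (k / (c + k * l)) l := fun h => by
    simpa [div_eq_inv_mul] using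
      ((((hasDerivAt_id l).const_mul _).const_add _).log h.ne')
  refine ((((hlog hs).const_mul (a + b)).sub ((hlog hp).const_mul a)).sub
    ((hlog hq).const_mul b)).const_mul 2 |>.congr_deriv ?_
  field_simp
  ring

lemma loocvOptimum_pos (ha : 1 < a) (hb : 1 < b) (hΔ : 0 < (a - b) ^ 2 - (a + b)) :
    0 < loocvOptimum a b :=
  div_pos (by nlinarith) (by linarith)

lemma continuousOn_loocvDevSingle (ha : 1 < a) (hb : 1 < b) :
    ContinuousOn (loocvDevSingle a b) (Ici 0) := fun x hx =>
  (hasDerivAt_loocvDevSingle (by linarith [mem_Ici.mp hx])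
    (by linarith [mem_Ici.mp hx])).continuousAt.continuousWithinAt

variable (ha : 1 < a) (hb : 1 < b) (hΔ : 0 < (a - b) ^ 2 - (a + b))
include ha hb hΔ

lemma strictAntiOn_loocvDevSingle :
    StrictAntiOn (loocvDevSingle a b) (Icc 0 (loocvOptimum a b)) := by
  refine strictAntiOn_of_deriv_neg (convex_Icc _ _)
    ((continuousOn_loocvDevSingle ha hb).mono Icc_subset_Ici_self) fun x hx => ?_
  rw [interior_Icc] at hx
  have hp : 0 < a - 1 + 2 * x := by linarith [hx.1]
  have hq : 0 < b - 1 + 2 * x := by linarith [hx.1]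
  have hs : 0 < a + b - 1 + 4 * x := by linarith
  have hnum : 2 * ((a - b) ^ 2 - (a + b)) * x < a * (a - 1) + b * (b - 1) := by
    have := hx.2
    rwa [loocvOptimum, lt_div_iff₀' (by linarith)] at this
  rw [(hasDerivAt_loocvDevSingle hp hq).deriv]
  exact div_neg_of_neg_of_pos (by linarith) (by positivity)

lemma strictMonoOn_loocvDevSingle :
    StrictMonoOn (loocvDevSingle a b) (Ici (loocvOptimum a b)) := by
  have hopt := loocvOptimum_pos ha hb hΔ
  refine strictMonoOn_of_deriv_pos (convex_Ici _)
    ((continuousOn_loocvDevSingle ha hb).mono (Ici_subset_Ici.mpr hopt.le)) fun x hx => ?_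
  rw [interior_Ici, mem_Ioi] at hx
  have hp : 0 < a - 1 + 2 * x := by linarith
  have hq : 0 < b - 1 + 2 * x := by linarith
  have hs : 0 < a + b - 1 + 4 * x := by linarith
  have hnum : a * (a - 1) + b * (b - 1) < 2 * ((a - b) ^ 2 - (a + b)) * x := by
    rwa [loocvOptimum, div_lt_iff₀' (by linarith)] at hx
  rw [(hasDerivAt_loocvDevSingle hp hq).deriv]
  exact div_pos (by linarith) (by positivity)

lemma loocvDevSingle_optimum_lt {l : ℝ} (hl : 0 ≤ l) (hne : l ≠ loocvOptimum a b) :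
    loocvDevSingle a b (loocvOptimum a b) < loocvDevSingle a b l := by
  have hopt := loocvOptimum_pos ha hb hΔ
  rcases hne.lt_or_gt with hlt | hgt
  · exact strictAntiOn_loocvDevSingle ha hb hΔ ⟨hl, hlt.le⟩ ⟨hopt.le, le_rfl⟩ hlt
  · exact strictMonoOn_loocvDevSingle ha hb hΔ self_mem_Ici hgt.le hgt

end Calculus

/-- For `K = 1` with `a_{10}, a_{11} > 1` and `(a_{10} − a_{11})² − a_{1•} > 0`, the LOOCV
deviance is uniquely minimized over `[0, ∞)` at
`λ* = (a_{10}(a_{10}−1) + a_{11}(a_{11}−1)) / (2((a_{10}−a_{11})² − a_{1•}))`. -/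
theorem stmt5 (a10 a11 : ℕ) (h0 : 1 < a10) (h1 : 1 < a11)
    (hsep : 0 < ((a10 : ℝ) - (a11 : ℝ)) ^ 2 - ((a10 : ℝ) + (a11 : ℝ))) :
    ∀ l : ℝ, 0 ≤ l →
      l ≠ ((a10 : ℝ) * ((a10 : ℝ) - 1) + (a11 : ℝ) * ((a11 : ℝ) - 1)) /
          (2 * (((a10 : ℝ) - (a11 : ℝ)) ^ 2 - ((a10 : ℝ) + (a11 : ℝ)))) →
      loocvDev 1 (fun _ => a10) (fun _ => a11)
        (((a10 : ℝ) * ((a10 : ℝ) - 1) + (a11 : ℝ) * ((a11 : ℝ) - 1)) /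
          (2 * (((a10 : ℝ) - (a11 : ℝ)) ^ 2 - ((a10 : ℝ) + (a11 : ℝ))))) <
      loocvDev 1 (fun _ => a10) (fun _ => a11) l := by
  intro l hl hne
  have ha : (1 : ℝ) < a10 := by exact_mod_cast h0
  have hb : (1 : ℝ) < a11 := by exact_mod_cast h1
  have hopt := loocvOptimum_pos ha hb hsep
  rw [loocvOptimum] at hopt
  rw [loocvDev_one_eq_loocvDevSingle h0 h1 hopt.le, loocvDev_one_eq_loocvDevSingle h0 h1 hl]
  exact loocvDevSingle_optimum_lt ha hb hsep hl hne
end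

section
/- If for every k = 1,…,K one has min(a_{k0}, a_{k1}) = 0 and max(a_{k0}, a_{k1}) = a_{k•} > 1 (complete separation in the data), then the LOOCV deviance D is strictly increasing on [0, ∞): for all 0 ≤ λ₁ < λ₂ one has D(λ₁) < D(λ₂); in particular D is uniquely minimized at λ = 0. -/
open Real Set

lemma log_div_add_mul_strictAntiOn {c : ℝ} (hc : 0 < c) :
    StrictAntiOn (fun l : ℝ => log ((c + 2 * l) / (c + 4 * l))) (Ici 0) := by
  intro l₁ hl₁ l₂ hl₂ hlt
  simp only [mem_Ici] at hl₁ hl₂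
  apply log_lt_log (by positivity)
  rw [div_lt_div_iff₀ (by positivity) (by positivity)]
  nlinarith

noncomputable def loocvTerm (n₀ n₁ : ℕ) (l : ℝ) : ℝ :=
  (n₀ : ℝ) * log (1 - ((n₁ : ℝ) + 2 * l) / ((n₀ : ℝ) + (n₁ : ℝ) - 1 + 4 * l)) +
    (n₁ : ℝ) * log (((n₁ : ℝ) - 1 + 2 * l) / ((n₀ : ℝ) + (n₁ : ℝ) - 1 + 4 * l))

lemma loocvDev_eq_sum_loocvTerm (K : ℕ) (a0 a1 : Fin K → ℕ) (l : ℝ) :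
    loocvDev K a0 a1 l = -2 * ∑ k, loocvTerm (a0 k) (a1 k) l :=
  rfl

lemma loocvTerm_zero_left (n : ℕ) (l : ℝ) :
    loocvTerm 0 n l = n * log (((n : ℝ) - 1 + 2 * l) / ((n : ℝ) - 1 + 4 * l)) := by
  simp [loocvTerm]

lemma loocvTerm_zero_right {n : ℕ} {l : ℝ} (hn : 1 < n) (hl : 0 ≤ l) :
    loocvTerm n 0 l = n * log (((n : ℝ) - 1 + 2 * l) / ((n : ℝ) - 1 + 4 * l)) := by
  have hn' : (1 : ℝ) < n := by exact_mod_cast hn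
  have hd : (n : ℝ) - 1 + 4 * l ≠ 0 := by positivity
  simp only [loocvTerm, CharP.cast_eq_zero, zero_add, add_zero, zero_mul]
  rw [one_sub_div hd]
  ring_nf

lemma loocvTerm_strictAntiOn {n₀ n₁ : ℕ} (hmin : min n₀ n₁ = 0) (hn : 1 < n₀ + n₁) :
    StrictAntiOn (loocvTerm n₀ n₁) (Ici 0) := by
  obtain ⟨n, hn1, hterm⟩ : ∃ n : ℕ, 1 < n ∧ EqOn (loocvTerm n₀ n₁)
      (fun l => n * log (((n : ℝ) - 1 + 2 * l) / ((n : ℝ) - 1 + 4 * l))) (Ici 0) := by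
    rcases Nat.min_eq_zero_iff.mp hmin with rfl | rfl
    · exact ⟨n₁, by omega, fun l _ => loocvTerm_zero_left n₁ l⟩
    · exact ⟨n₀, by omega, fun l hl => loocvTerm_zero_right (by omega) hl⟩
  have hn' : (1 : ℝ) < n := by exact_mod_cast hn1
  refine StrictAntiOn.congr ?_ hterm.symm
  intro l₁ hl₁ l₂ hl₂ hlt
  exact mul_lt_mul_of_pos_left
    (log_div_add_mul_strictAntiOn (sub_pos.mpr hn') hl₁ hl₂ hlt) (by positivity)

lemma loocvDev_strictMonoOn {K : ℕ} (hK : 1 ≤ K) {a0 a1 : Fin K → ℕ}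
    (hsep : ∀ k, min (a0 k) (a1 k) = 0 ∧ 1 < a0 k + a1 k) :
    StrictMonoOn (loocvDev K a0 a1) (Ici 0) := by
  intro l₁ hl₁ l₂ hl₂ hlt
  have : Nonempty (Fin K) := Fin.pos_iff_nonempty.mp hK
  have hsum : ∑ k, loocvTerm (a0 k) (a1 k) l₂ < ∑ k, loocvTerm (a0 k) (a1 k) l₁ :=
    Finset.sum_lt_sum_of_nonempty Finset.univ_nonempty fun k _ =>
      loocvTerm_strictAntiOn (hsep k).1 (hsep k).2 hl₁ hl₂ hlt
  simp only [loocvDev_eq_sum_loocvTerm]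
  linarith

/-- Under complete separation (`min(a_{k0}, a_{k1}) = 0` and
`max(a_{k0}, a_{k1}) = a_{k•} > 1` for all `k`) the LOOCV deviance is strictly increasing
on `[0, ∞)`; in particular it is uniquely minimized at `λ = 0`. -/
theorem stmt6 (K : ℕ) (hK : 1 ≤ K) (a0 a1 : Fin K → ℕ)
    (h : ∀ k, min (a0 k) (a1 k) = 0 ∧ max (a0 k) (a1 k) = a0 k + a1 k ∧
      1 < a0 k + a1 k) :
    (∀ l1 l2 : ℝ, 0 ≤ l1 → l1 < l2 →
      loocvDev K a0 a1 l1 < loocvDev K a0 a1 l2) ∧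
    ∀ l : ℝ, 0 ≤ l → l ≠ 0 → loocvDev K a0 a1 0 < loocvDev K a0 a1 l := by
  have hmono := loocvDev_strictMonoOn hK fun k => ⟨(h k).1, (h k).2.2⟩
  refine ⟨fun l1 l2 h1 h12 => hmono h1 (h1.trans h12.le) h12, fun l hl hne => ?_⟩
  exact hmono self_mem_Ici hl (hl.lt_of_ne' hne)
end
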